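/- arXiv:2302.00184 — 2 statements merged into one kernel-verified Lean document; each statement's English description precedes it below -/
import Mathlib

section
/- Let φ be a holomorphic function on a connected open set U ⊆ ℂ^m invariant under Z ↦ σ(Z) for the orthogonal reflection σ in a hyperplane λ^⊥ (with (λ,λ) ≠ 0), such that Δφ = 0 for the Laplace operator Δ of the bilinear form, and φ vanishes to order ≥ 2 along λ^⊥ (i.e., φ(zλ + Z') = O(z²)). Then φ is identically zero. -/
/-!
Since `(λ, λ) ≠ 0`, the hyperplane `λ^⊥` is non-characteristic for `Δ`: if `g` vanishes on
`λ^⊥`, its Hessian at a point of `λ^⊥` vanishes on pairs of tangent vectors, and there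
`Δ g = (λ, λ)⁻¹ ∂_λ² g`. As `∂_λ` commutes with `Δ`, induction on `n` shows that every `∂_λⁿ φ`
vanishes on `λ^⊥`. Splitting any direction into a multiple of `λ` and a tangent vector, every
iterated derivative of `φ` vanishes at a point of `λ^⊥ ∩ U`, so `φ` vanishes near that point by
its Taylor series, hence on `U` by the identity theorem.
-/

open Finset

/-- Partial derivative in the `j`-th coordinate of a function on `Fin m → ℂ`. -/
noncomputable def pd {m : ℕ} (j : Fin m) (g : (Fin m → ℂ) → ℂ) : (Fin m → ℂ) → ℂ :=
  fun Z => deriv (fun u => g (Function.update Z j u)) (Z j)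

open Set Topology Matrix

variable {𝕜 : Type*} [NontriviallyNormedField 𝕜] {F : Type*} [NormedAddCommGroup F]
  [NormedSpace 𝕜 F]

section DirectionalDerivative

variable {E : Type*} [NormedAddCommGroup E] [NormedSpace 𝕜 E] {f g : E → F} {U : Set E} {z v : E}

variable (𝕜) in
noncomputable def dirDeriv (v : E) (f : E → F) : E → F :=
  fun z => fderiv 𝕜 f z v

theorem AnalyticOnNhd.dirDeriv [CompleteSpace F] (hf : AnalyticOnNhd 𝕜 f U) (v : E) :
    AnalyticOnNhd 𝕜 (dirDeriv 𝕜 v f) U :=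
  fun z hz => ((ContinuousLinearMap.apply 𝕜 F v).analyticAt _).comp (hf z hz).fderiv

theorem Set.EqOn.dirDeriv (h : EqOn f g U) (hU : IsOpen U) (v : E) :
    EqOn (dirDeriv 𝕜 v f) (dirDeriv 𝕜 v g) U := fun z hz => by
  simp only [_root_.dirDeriv, (h.eventuallyEq_of_mem (hU.mem_nhds hz)).fderiv_eq]

theorem dirDeriv_dirDeriv_apply (hf : DifferentiableAt 𝕜 (fderiv 𝕜 f) z) (u v : E) :
    dirDeriv 𝕜 u (dirDeriv 𝕜 v f) z = fderiv 𝕜 (fderiv 𝕜 f) z u v := by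
  change fderiv 𝕜 (fun y => fderiv 𝕜 f y v) z u = _
  rw [fderiv_clm_apply hf (differentiableAt_const v)]
  simp

theorem AnalyticAt.dirDeriv_comm [CompleteSpace F] (hf : AnalyticAt 𝕜 f z) (u v : E) :
    dirDeriv 𝕜 u (dirDeriv 𝕜 v f) z = dirDeriv 𝕜 v (dirDeriv 𝕜 u f) z := by
  have hd := hf.fderiv.differentiableAt
  rw [dirDeriv_dirDeriv_apply hd, dirDeriv_dirDeriv_apply hd]
  exact hf.contDiffAt.isSymmSndFDerivAt_of_omega u v

theorem dirDeriv_eq_zero_of_eq_zero_on_submodule {S : Submodule 𝕜 E} (hU : IsOpen U)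
    (hf : ∀ y ∈ U, y ∈ S → f y = 0) (hz : z ∈ U) (hzS : z ∈ S) (hv : v ∈ S) :
    dirDeriv 𝕜 v f z = 0 := by
  by_cases hd : DifferentiableAt 𝕜 f z
  · have hline : ∀ᶠ t in 𝓝 (0 : 𝕜), z + t • v ∈ U :=
      (Continuous.tendsto (by fun_prop) 0).eventually (hU.mem_nhds (by simpa using hz))
    have h0 : (fun t : 𝕜 => f (z + t • v)) =ᶠ[𝓝 0] fun _ => 0 := hline.mono fun t ht =>
      hf _ ht (S.add_mem hzS (S.smul_mem t hv))
    rw [dirDeriv, ← hd.lineDeriv_eq_fderiv, lineDeriv, h0.deriv_eq, deriv_const]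
  · simp [dirDeriv, fderiv_zero_of_not_differentiableAt hd]

theorem analyticOnNhd_foldr_dirDeriv [CompleteSpace F] (hf : AnalyticOnNhd 𝕜 f U) (L : List E) :
    AnalyticOnNhd 𝕜 (L.foldr (dirDeriv 𝕜) f) U := by
  induction L with
  | nil => exact hf
  | cons v L ih => exact ih.dirDeriv v

theorem analyticOnNhd_iterate_dirDeriv [CompleteSpace F] (hf : AnalyticOnNhd 𝕜 f U) (v : E)
    (n : ℕ) :
    AnalyticOnNhd 𝕜 ((dirDeriv 𝕜 v)^[n] f) U := by
  induction n with
  | zero => exact hf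
  | succ n ih => rw [Function.iterate_succ_apply']; exact ih.dirDeriv v

theorem dirDeriv_foldr_comm [CompleteSpace F] (hf : AnalyticOnNhd 𝕜 f U)
    (hU : IsOpen U) (v : E) (L : List E) :
    EqOn (dirDeriv 𝕜 v (L.foldr (dirDeriv 𝕜) f)) (L.foldr (dirDeriv 𝕜) (dirDeriv 𝕜 v f)) U := by
  induction L with
  | nil => exact fun _ _ => rfl
  | cons u L ih =>
    intro z hz
    rw [List.foldr_cons, (analyticOnNhd_foldr_dirDeriv hf L z hz).dirDeriv_comm]
    exact ih.dirDeriv hU u hz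

theorem iteratedFDeriv_apply_eq_foldr_dirDeriv [CompleteSpace F] (hf : AnalyticOnNhd 𝕜 f U)
    (hU : IsOpen U) {n : ℕ} (w : Fin n → E) (hz : z ∈ U) :
    iteratedFDeriv 𝕜 n f z w = (List.ofFn w).foldr (dirDeriv 𝕜) f z := by
  induction n generalizing z with
  | zero => simp
  | succ n ih =>
    have hEq : EqOn (fun y => iteratedFDeriv 𝕜 n f y (Fin.tail w))
        ((List.ofFn (Fin.tail w)).foldr (dirDeriv 𝕜) f) U := fun y hy => ih (Fin.tail w) hy
    rw [iteratedFDeriv_succ_apply_left, ← fderiv_continuousMultilinear_apply_const_apply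
      ((hf.iteratedFDeriv n z hz).differentiableAt), List.ofFn_succ, List.foldr_cons]
    exact hEq.dirDeriv hU (w 0) hz

theorem AnalyticAt.eventually_eq_zero_of_iteratedFDeriv_eq_zero [CharZero 𝕜] [CompleteSpace F]
    {x : E} (hf : AnalyticAt 𝕜 f x) (h : ∀ n, iteratedFDeriv 𝕜 n f x = 0) : f =ᶠ[𝓝 x] 0 := by
  obtain ⟨p, r, hp⟩ := hf
  filter_upwards [Metric.eball_mem_nhds x hp.r_pos] with y hy
  have hsum := hp.hasSum_iteratedFDeriv (y := y - x) (by simpa [edist_eq_enorm_sub] using hy)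
  simp only [h, _root_.zero_apply, smul_zero, add_sub_cancel] at hsum
  exact hsum.unique hasSum_zero

theorem foldr_dirDeriv_eq_zero [CompleteSpace F] {ℓ : E →ₗ[𝕜] 𝕜} {lam : E} (hlam : ℓ lam ≠ 0)
    (hU : IsOpen U) (hf : AnalyticOnNhd 𝕜 f U)
    (hvan : ∀ n, ∀ z ∈ U, ℓ z = 0 → (dirDeriv 𝕜 lam)^[n] f z = 0) (L : List E) :
    ∀ z ∈ U, ℓ z = 0 → L.foldr (dirDeriv 𝕜) f z = 0 := by
  induction L generalizing f with
  | nil => exact hvan 0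
  | cons v L ih =>
    intro z hz hzℓ
    set a := ℓ v / ℓ lam
    set D := L.foldr (dirDeriv 𝕜) f
    have hker : ℓ (v - a • lam) = 0 := by simp [a, hlam]
    have hsplit : dirDeriv 𝕜 v D z = a • dirDeriv 𝕜 lam D z + dirDeriv 𝕜 (v - a • lam) D z := by
      simp only [dirDeriv, ← map_smul, ← map_add, add_sub_cancel]
    have hnormal : dirDeriv 𝕜 lam D z = 0 := by
      rw [dirDeriv_foldr_comm hf hU lam L hz]
      refine ih (hf.dirDeriv lam) (fun n y hy hyℓ => ?_) z hz hzℓ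
      rw [← Function.iterate_succ_apply]
      exact hvan (n + 1) y hy hyℓ
    have htangent : dirDeriv 𝕜 (v - a • lam) D z = 0 :=
      dirDeriv_eq_zero_of_eq_zero_on_submodule (S := LinearMap.ker ℓ) hU (ih hf hvan) hz hzℓ hker
    rw [List.foldr_cons, hsplit, hnormal, htangent, smul_zero, add_zero]

theorem eqOn_zero_of_iterate_dirDeriv_eq_zero [CharZero 𝕜] [CompleteSpace F]
    {ℓ : E →ₗ[𝕜] 𝕜} {lam z₀ : E} (hf : AnalyticOnNhd 𝕜 f U) (hU : IsOpen U)
    (hUc : IsPreconnected U) (hlam : ℓ lam ≠ 0) (hz₀ : z₀ ∈ U) (hz₀ℓ : ℓ z₀ = 0)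
    (hvan : ∀ n, ∀ z ∈ U, ℓ z = 0 → (dirDeriv 𝕜 lam)^[n] f z = 0) : EqOn f 0 U := by
  have hD : ∀ n, iteratedFDeriv 𝕜 n f z₀ = 0 := fun n => by
    ext w
    rw [iteratedFDeriv_apply_eq_foldr_dirDeriv hf hU w hz₀]
    exact foldr_dirDeriv_eq_zero hlam hU hf hvan _ z₀ hz₀ hz₀ℓ
  exact hf.eqOn_zero_of_preconnected_of_eventuallyEq_zero hUc hz₀
    ((hf z₀ hz₀).eventually_eq_zero_of_iteratedFDeriv_eq_zero hD)

end DirectionalDerivative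

section FormLaplacian

variable {ι : Type*} [Fintype ι]

theorem apply_eq_sub_of_eq_zero_on_ker {μ lam : ι → 𝕜} (hc : μ ⬝ᵥ lam ≠ 0)
    (H : (ι → 𝕜) →L[𝕜] (ι → 𝕜) →L[𝕜] F)
    (hH : ∀ u v, μ ⬝ᵥ u = 0 → μ ⬝ᵥ v = 0 → H u v = 0) (u v : ι → 𝕜) :
    H u v = (μ ⬝ᵥ v / μ ⬝ᵥ lam) • H u lam + (μ ⬝ᵥ u / μ ⬝ᵥ lam) • H lam v
      - (μ ⬝ᵥ u / μ ⬝ᵥ lam * (μ ⬝ᵥ v / μ ⬝ᵥ lam)) • H lam lam := by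
  have hker : ∀ w, μ ⬝ᵥ (w - (μ ⬝ᵥ w / μ ⬝ᵥ lam) • lam) = 0 := fun w => by
    simp only [dotProduct_sub, dotProduct_smul, smul_eq_mul]
    field_simp
    ring
  have h0 := hH _ _ (hker u) (hker v)
  simp only [map_sub, map_smul, _root_.sub_apply, _root_.smul_apply] at h0
  rw [← sub_eq_zero, ← h0]
  module

variable [DecidableEq ι]

theorem sum_smul_apply_single {M : Type*} [AddCommMonoid M] [Module 𝕜 M] [TopologicalSpace M]
    (L : (ι → 𝕜) →L[𝕜] M) (x : ι → 𝕜) : ∑ i, x i • L (Pi.single i 1) = L x := by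
  conv_rhs => rw [pi_eq_sum_univ' x]
  simp only [map_sum, map_smul]

theorem apply_self_eq_smul_sum_of_eq_zero_on_ker {Q : Matrix ι ι 𝕜} (hQ : Q.IsSymm)
    {μ lam : ι → 𝕜} (hQμ : Q *ᵥ μ = lam) (hc : μ ⬝ᵥ lam ≠ 0)
    (H : (ι → 𝕜) →L[𝕜] (ι → 𝕜) →L[𝕜] F)
    (hH : ∀ u v, μ ⬝ᵥ u = 0 → μ ⬝ᵥ v = 0 → H u v = 0) :
    H lam lam = (μ ⬝ᵥ lam) • ∑ i, ∑ j, Q i j • H (Pi.single i 1) (Pi.single j 1) := by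
  set c := μ ⬝ᵥ lam
  set e : ι → ι → 𝕜 := fun i => Pi.single i 1
  set a : ι → 𝕜 := fun i => μ i / c
  have hexp : ∀ i j, H (e i) (e j)
      = a j • H (e i) lam + a i • H lam (e j) - (a i * a j) • H lam lam := fun i j => by
    simpa only [e, a, dotProduct_single, mul_one] using
      apply_eq_sub_of_eq_zero_on_ker hc H hH (e i) (e j)
  have hrow : ∀ i, ∑ j, Q i j * a j = c⁻¹ * lam i := fun i => by
    simp only [← hQμ, a, mulVec, dotProduct, Finset.mul_sum, div_eq_mul_inv]
    exact Finset.sum_congr rfl fun j _ => by ring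
  have hcol : ∀ j, ∑ i, Q i j * a i = c⁻¹ * lam j := fun j => by
    simp only [← hrow j, hQ.apply]
  have hlam_left : ∀ w, ∑ i, lam i • H (e i) w = H lam w := fun w =>
    sum_smul_apply_single (H.flip w) lam
  have hlam_right : ∀ w, ∑ i, lam i • H w (e i) = H w lam := fun w =>
    sum_smul_apply_single (H w) lam
  have hmixed_left : ∑ i, ∑ j, Q i j • a j • H (e i) lam = c⁻¹ • H lam lam := by
    simp_rw [smul_smul, ← Finset.sum_smul, hrow, mul_smul, ← Finset.smul_sum, hlam_left]
  have hmixed_right : ∑ i, ∑ j, Q i j • a i • H lam (e j) = c⁻¹ • H lam lam := by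
    rw [Finset.sum_comm]
    simp_rw [smul_smul, ← Finset.sum_smul, hcol, mul_smul, ← Finset.smul_sum, hlam_right]
  have hquadratic : ∑ i, ∑ j, Q i j • (a i * a j) • H lam lam = c⁻¹ • H lam lam := by
    simp_rw [smul_smul, ← Finset.sum_smul]
    congr 1
    calc ∑ i, ∑ j, Q i j * (a i * a j) = ∑ i, a i * ∑ j, Q i j * a j := by
          simp only [Finset.mul_sum]; exact Finset.sum_congr rfl fun i _ =>
            Finset.sum_congr rfl fun j _ => by ring
      _ = c⁻¹ * c⁻¹ * c := by
          simp only [hrow]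
          simp only [a, c, dotProduct, Finset.mul_sum]
          exact Finset.sum_congr rfl fun i _ => by ring
      _ = c⁻¹ := by field_simp
  have hsum : ∑ i, ∑ j, Q i j • H (e i) (e j) = c⁻¹ • H lam lam := by
    simp_rw [hexp, smul_sub, smul_add, Finset.sum_sub_distrib, Finset.sum_add_distrib,
      hmixed_left, hmixed_right, hquadratic, add_sub_cancel_right]
  rw [hsum, smul_smul, mul_inv_cancel₀ hc, one_smul]

noncomputable def formLaplacian (Q : Matrix ι ι 𝕜) (f : (ι → 𝕜) → F) : (ι → 𝕜) → F :=
  fun z => ∑ i, ∑ j, Q i j • dirDeriv 𝕜 (Pi.single i 1) (dirDeriv 𝕜 (Pi.single j 1) f) z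

variable {Q : Matrix ι ι 𝕜} {f : (ι → 𝕜) → F} {U : Set (ι → 𝕜)} {z : ι → 𝕜}

theorem formLaplacian_dirDeriv [CompleteSpace F] (hf : AnalyticOnNhd 𝕜 f U) (hU : IsOpen U)
    (v : ι → 𝕜) :
    EqOn (formLaplacian Q (dirDeriv 𝕜 v f)) (dirDeriv 𝕜 v (formLaplacian Q f)) U := by
  intro z hz
  have hcomm : ∀ u w : ι → 𝕜, dirDeriv 𝕜 u (dirDeriv 𝕜 w (dirDeriv 𝕜 v f)) z
      = dirDeriv 𝕜 v (dirDeriv 𝕜 u (dirDeriv 𝕜 w f)) z := fun u w => by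
    rw [Set.EqOn.dirDeriv (fun y hy => (hf y hy).dirDeriv_comm w v) hU u hz]
    exact ((hf.dirDeriv w) z hz).dirDeriv_comm u v
  have hderiv : HasFDerivAt (formLaplacian Q f) (∑ i, ∑ j, Q i j •
      fderiv 𝕜 (dirDeriv 𝕜 (Pi.single i 1) (dirDeriv 𝕜 (Pi.single j 1) f)) z) z :=
    HasFDerivAt.fun_sum fun i _ => HasFDerivAt.fun_sum fun j _ =>
      (((hf.dirDeriv _).dirDeriv _) z hz).differentiableAt.hasFDerivAt.const_smul (Q i j)
  simp only [formLaplacian, hcomm]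
  rw [dirDeriv, hderiv.fderiv]
  simp [dirDeriv]

theorem formLaplacian_iterate_dirDeriv_eq_zero [CompleteSpace F] (hf : AnalyticOnNhd 𝕜 f U)
    (hU : IsOpen U) (hΔ : ∀ z ∈ U, formLaplacian Q f z = 0) (v : ι → 𝕜) (n : ℕ) :
    ∀ z ∈ U, formLaplacian Q ((dirDeriv 𝕜 v)^[n] f) z = 0 := by
  induction n with
  | zero => exact hΔ
  | succ n ih =>
    intro z hz
    rw [Function.iterate_succ_apply',
      formLaplacian_dirDeriv (analyticOnNhd_iterate_dirDeriv hf v n) hU v hz,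
      Set.EqOn.dirDeriv (g := 0) ih hU v hz]
    simp [dirDeriv]

theorem dirDeriv_dirDeriv_eq_zero_of_formLaplacian_eq_zero [CompleteSpace F] (hQ : Q.IsSymm)
    {μ lam : ι → 𝕜} (hQμ : Q *ᵥ μ = lam) (hc : μ ⬝ᵥ lam ≠ 0) (hf : AnalyticOnNhd 𝕜 f U)
    (hU : IsOpen U) (hΔ : ∀ z ∈ U, formLaplacian Q f z = 0)
    (h0 : ∀ z ∈ U, μ ⬝ᵥ z = 0 → f z = 0) (hz : z ∈ U) (hzμ : μ ⬝ᵥ z = 0) :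
    dirDeriv 𝕜 lam (dirDeriv 𝕜 lam f) z = 0 := by
  have hD2 : ∀ u v, dirDeriv 𝕜 u (dirDeriv 𝕜 v f) z = fderiv 𝕜 (fderiv 𝕜 f) z u v :=
    dirDeriv_dirDeriv_apply (hf z hz).fderiv.differentiableAt
  let S := LinearMap.ker (dotProductBilin 𝕜 𝕜 μ)
  have hS : ∀ y, y ∈ S ↔ μ ⬝ᵥ y = 0 := fun y => by simp [S]
  have htangent : ∀ u v, μ ⬝ᵥ u = 0 → μ ⬝ᵥ v = 0 → fderiv 𝕜 (fderiv 𝕜 f) z u v = 0 :=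
    fun u v hu hv => by
      rw [← hD2]
      refine dirDeriv_eq_zero_of_eq_zero_on_submodule hU (fun y hy hyS => ?_) hz ((hS z).2 hzμ)
        ((hS u).2 hu)
      exact dirDeriv_eq_zero_of_eq_zero_on_submodule hU
        (fun y hy hyS => h0 y hy ((hS y).1 hyS)) hy hyS ((hS v).2 hv)
  rw [hD2, apply_self_eq_smul_sum_of_eq_zero_on_ker hQ hQμ hc _ htangent]
  simp only [← hD2]
  rw [← formLaplacian, hΔ z hz, smul_zero]

theorem iterate_dirDeriv_eq_zero_of_formLaplacian_eq_zero [CompleteSpace F] (hQ : Q.IsSymm)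
    {μ lam : ι → 𝕜} (hQμ : Q *ᵥ μ = lam) (hc : μ ⬝ᵥ lam ≠ 0) (hf : AnalyticOnNhd 𝕜 f U)
    (hU : IsOpen U) (hΔ : ∀ z ∈ U, formLaplacian Q f z = 0)
    (h0 : ∀ z ∈ U, μ ⬝ᵥ z = 0 → f z = 0) (h1 : ∀ z ∈ U, μ ⬝ᵥ z = 0 → dirDeriv 𝕜 lam f z = 0)
    (n : ℕ) : ∀ z ∈ U, μ ⬝ᵥ z = 0 → (dirDeriv 𝕜 lam)^[n] f z = 0 := by
  induction n using Nat.twoStepInduction with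
  | zero => exact h0
  | one => exact h1
  | more n ih _ =>
    intro z hz hzμ
    rw [Function.iterate_succ_apply', Function.iterate_succ_apply']
    exact dirDeriv_dirDeriv_eq_zero_of_formLaplacian_eq_zero hQ hQμ hc
      (analyticOnNhd_iterate_dirDeriv hf lam n) hU
      (formLaplacian_iterate_dirDeriv_eq_zero hf hU hΔ lam n) ih hz hzμ

end FormLaplacian

theorem update_eq_add_smul_single {m : ℕ} (z : Fin m → ℂ) (j : Fin m) (u : ℂ) :
    Function.update z j u = z + (u - z j) • Pi.single j 1 := by
  rw [Pi.update_eq_sub_add_single, ← Pi.single_smul, smul_eq_mul, mul_one, Pi.single_sub]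
  abel

theorem pd_eq_lineDeriv {m : ℕ} (j : Fin m) (f : (Fin m → ℂ) → ℂ) (z : Fin m → ℂ) :
    pd j f z = lineDeriv ℂ f z (Pi.single j 1) := by
  simp only [pd, update_eq_add_smul_single, lineDeriv]
  simpa using deriv_comp_sub_const (fun t : ℂ => f (z + t • Pi.single j 1)) (z j) (z j)

theorem pd_pd_eq_dirDeriv_dirDeriv {m : ℕ} {f : (Fin m → ℂ) → ℂ} {U : Set (Fin m → ℂ)}
    (hf : AnalyticOnNhd ℂ f U) (hU : IsOpen U) {z : Fin m → ℂ} (hz : z ∈ U) (i j : Fin m) :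
    pd i (pd j f) z = dirDeriv ℂ (Pi.single i 1) (dirDeriv ℂ (Pi.single j 1) f) z := by
  have hpd : EqOn (pd j f) (dirDeriv ℂ (Pi.single j 1) f) U := fun y hy =>
    (pd_eq_lineDeriv j f y).trans (hf y hy).differentiableAt.lineDeriv_eq_fderiv
  rw [pd_eq_lineDeriv, (hpd.eventuallyEq_of_mem (hU.mem_nhds hz)).lineDeriv_eq,
    ((hf.dirDeriv _) z hz).differentiableAt.lineDeriv_eq_fderiv]
  rfl

theorem stmt_9_general {m : ℕ} (G : Matrix (Fin m) (Fin m) ℂ) (hG : G.IsSymm) (hGnd : IsUnit G.det)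
    (Bf : (Fin m → ℂ) → (Fin m → ℂ) → ℂ)
    (hBf : Bf = fun x y => ∑ i, ∑ j, G i j * x i * y j)
    (lam : Fin m → ℂ) (hlam : Bf lam lam ≠ 0)
    (U : Set (Fin m → ℂ)) (hUopen : IsOpen U) (hUconn : IsPreconnected U)
    (hmeet : ∃ Z ∈ U, Bf lam Z = 0)
    (φ : (Fin m → ℂ) → ℂ) (hφan : AnalyticOnNhd ℂ φ U)
    (hharm : ∀ Z ∈ U, ∑ i, ∑ j, (G⁻¹) i j * pd i (pd j φ) Z = 0)
    (hvan : ∀ Z ∈ U, Bf lam Z = 0 →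
      φ Z = 0 ∧ deriv (fun t : ℂ => φ (Z + t • lam)) 0 = 0) :
    ∀ Z ∈ U, φ Z = 0 := by
  obtain ⟨Z₀, hZ₀, hZ₀ℓ⟩ := hmeet
  set μ := lam ᵥ* G
  have hBf_eq : ∀ Z, Bf lam Z = μ ⬝ᵥ Z := fun Z => by
    simp only [hBf, μ, dotProduct, vecMul, Finset.sum_mul]
    rw [Finset.sum_comm]
    simp only [mul_comm (G _ _)]
  have hQμ : G⁻¹ *ᵥ μ = lam := by
    rw [show μ = Gᵀ *ᵥ lam from (mulVec_transpose G lam).symm, hG.eq, mulVec_mulVec,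
      nonsing_inv_mul _ hGnd, one_mulVec]
  have hΔ : ∀ Z ∈ U, formLaplacian G⁻¹ φ Z = 0 := fun Z hZ => by
    simpa only [formLaplacian, smul_eq_mul, pd_pd_eq_dirDeriv_dirDeriv hφan hUopen hZ]
      using hharm Z hZ
  have h1 : ∀ Z ∈ U, μ ⬝ᵥ Z = 0 → dirDeriv ℂ lam φ Z = 0 := fun Z hZ hZμ => by
    rw [dirDeriv, ← (hφan Z hZ).differentiableAt.lineDeriv_eq_fderiv]
    exact (hvan Z hZ ((hBf_eq Z).trans hZμ)).2
  refine eqOn_zero_of_iterate_dirDeriv_eq_zero (ℓ := dotProductBilin ℂ ℂ μ) hφan hUopen hUconn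
    (by simpa [hBf_eq] using hlam) hZ₀ (by simpa [hBf_eq] using hZ₀ℓ) ?_
  simp only [dotProductBilin_apply_apply]
  exact iterate_dirDeriv_eq_zero_of_formLaplacian_eq_zero hG.inv hQμ (by rwa [← hBf_eq])
    hφan hUopen hΔ (fun Z hZ hZμ => (hvan Z hZ ((hBf_eq Z).trans hZμ)).1) h1

/-- Let `ℂ^m` carry the nondegenerate symmetric bilinear form with Gram matrix
`G`, with Laplace operator `Δ = ∑_{j,k} (G⁻¹)_{jk} ∂²/(∂Z_j ∂Z_k)`, and let
`σ(Z) = Z − (2(λ,Z)/(λ,λ)) λ` be the reflection in the hyperplane `λ^⊥` (where `(λ,λ) ≠ 0`).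
If `φ` is holomorphic on a connected open `σ`-invariant set `U` meeting `λ^⊥`, invariant under
`σ`, `Δφ = 0` on `U`, and `φ` vanishes to order `≥ 2` along `λ^⊥` (both `φ` and its derivative
in the direction `λ` vanish at points of `λ^⊥ ∩ U`), then `φ` is identically zero on `U`. -/
theorem stmt_9 {m : ℕ} (G : Matrix (Fin m) (Fin m) ℂ) (hG : G.IsSymm) (hGnd : IsUnit G.det)
    (Bf : (Fin m → ℂ) → (Fin m → ℂ) → ℂ)
    (hBf : Bf = fun x y => ∑ i, ∑ j, G i j * x i * y j)
    (lam : Fin m → ℂ) (hlam : Bf lam lam ≠ 0)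
    (σ : (Fin m → ℂ) → (Fin m → ℂ))
    (hσ : σ = fun Z => Z - (2 * Bf lam Z / Bf lam lam) • lam)
    (U : Set (Fin m → ℂ)) (hUopen : IsOpen U) (hUconn : IsPreconnected U)
    (hUσ : ∀ Z ∈ U, σ Z ∈ U)
    (hmeet : ∃ Z ∈ U, Bf lam Z = 0)
    (φ : (Fin m → ℂ) → ℂ) (hφan : AnalyticOnNhd ℂ φ U)
    (hinv : ∀ Z ∈ U, φ (σ Z) = φ Z)
    (hharm : ∀ Z ∈ U, ∑ i, ∑ j, (G⁻¹) i j * pd i (pd j φ) Z = 0)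
    (hvan : ∀ Z ∈ U, Bf lam Z = 0 →
      φ Z = 0 ∧ deriv (fun t : ℂ => φ (Z + t • lam)) 0 = 0) :
    ∀ Z ∈ U, φ Z = 0 :=
  stmt_9_general G hG hGnd Bf hBf lam hlam U hUopen hUconn hmeet φ hφan hharm hvan
end

section
/- Let L be a positive definite integral lattice and let s be a eutactic star on L. For fixed τ ∈ ℍ, if x ∈ L' is a nonzero vector such that the hyperplane {𝔷 : (x, 𝔷) = 0} is contained in the zero set ⋃_j {𝔷 : (s_j, 𝔷) ∈ ℤτ + ℤ} of Θ_s(τ, ·), then x is proportional over ℚ to some s_j. -/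
/-!
Write `c_y` for the linear form `𝔷 ↦ (y, 𝔷)`. On the hyperplane `ker c_x` every point lies in
`c_{s_j}⁻¹ (ℤτ + ℤ)` for some `j`. If no `c_{s_j}` vanished on `ker c_x`, a vector space over the
infinite field `ℂ` would be a finite union of the proper subspaces `ker c_x ∩ ker c_{s_j}`, so some
`w ∈ ker c_x` has `c_{s_j} w ≠ 0` for all `j`; then each `z : ℂ` is `λ / c_{s_j} w` for some `j` and
`λ ∈ ℤτ + ℤ`, making `ℂ` countable. Hence `ker c_x ⊆ ker c_{s_j}`, so `G s_j = t G x` for a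
rational `t`, and `s_j = t x` because `G` is positive definite.
-/

open Finset Matrix LinearMap

theorem LinearMap.exists_smul_eq_of_ker_le {K V : Type*} [Field K] [AddCommGroup V] [Module K V]
    {f g : V →ₗ[K] K} (h : ker f ≤ ker g) : ∃ t : K, t • f = g := by
  have := mem_span_of_iInf_ker_le_ker (ι := Unit) (L := fun _ => f) (by simpa using h)
  simpa [Set.range_const, Submodule.mem_span_singleton] using this

theorem Submodule.exists_le_ker_of_forall_exists_mem_countable {K V ι : Type*} [Field K]
    [Uncountable K] [AddCommGroup V] [Module K V] [Finite ι] (W : Submodule K V)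
    (f : ι → V →ₗ[K] K) {Λ : Set K} (hΛ : Λ.Countable) (hW : ∀ w ∈ W, ∃ i, f i w ∈ Λ) :
    ∃ i, W ≤ ker (f i) := by
  by_contra! hne
  obtain ⟨w, hw⟩ : ∃ w : W, ∀ i, f i w ≠ 0 := by
    have : ⋃ i, ((ker (f i)).comap W.subtype : Set W) ≠ Set.univ := fun hcover => by
      obtain ⟨i, hi⟩ := Subspace.exists_eq_top_of_iUnion_eq_univ hcover
      exact hne i fun v hv => by simpa using Submodule.eq_top_iff'.mp hi ⟨v, hv⟩
    simpa [Set.eq_univ_iff_forall] using this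
  have hcover : (Set.univ : Set K) ⊆ ⋃ i, (· / f i w) '' Λ := fun z _ => by
    obtain ⟨i, hi⟩ := hW (z • (w : V)) (W.smul_mem z w.2)
    refine Set.mem_iUnion.mpr ⟨i, _, hi, ?_⟩
    simp [mul_div_cancel_right₀ _ (hw i)]
  exact Set.not_countable_univ ((Set.countable_iUnion fun i => hΛ.image _).mono hcover)

theorem Matrix.exists_eq_smul_of_dotProduct_eq_zero_imp {K n : Type*} [Field K] [Fintype n]
    {c d : n → K} (h : ∀ y, c ⬝ᵥ y = 0 → d ⬝ᵥ y = 0) : ∃ t : K, d = t • c := by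
  classical
  obtain ⟨t, ht⟩ := LinearMap.exists_smul_eq_of_ker_le
    (f := dotProductEquiv K n c) (g := dotProductEquiv K n d) fun y hy => h y hy
  exact ⟨t, (dotProductEquiv K n).injective (by rw [map_smul, ht])⟩

theorem Matrix.sum_sum_mul_mul_eq_vecMul_dotProduct {R n : Type*} [CommSemiring R] [Fintype n]
    (A : Matrix n n R) (y z : n → R) :
    ∑ i, ∑ j, A i j * y i * z j = y ᵥ* A ⬝ᵥ z := by
  simp only [dotProduct, vecMul, Finset.sum_mul]
  rw [Finset.sum_comm]
  exact Finset.sum_congr rfl fun _ _ => Finset.sum_congr rfl fun _ _ => by ring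

theorem stmt_16_general {l N : ℕ} (G : Matrix (Fin l) (Fin l) ℤ)
    (hGpos : ∀ x : Fin l → ℚ, x ≠ 0 → 0 < ∑ i, ∑ j, (G i j : ℚ) * x i * x j)
    (s : Fin N → (Fin l → ℚ)) (hs0 : ∀ jj, s jj ≠ 0)
    (τ : ℂ)
    (x : Fin l → ℚ)
    (hcover : ∀ 𝔷 : Fin l → ℂ,
      (∑ i, ∑ j, (G i j : ℂ) * ((x i : ℚ) : ℂ) * 𝔷 j) = 0 →
      ∃ jj : Fin N, ∃ a b : ℤ,
        (∑ i, ∑ j, (G i j : ℂ) * ((s jj i : ℚ) : ℂ) * 𝔷 j) = (a : ℂ) * τ + (b : ℂ)) :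
    ∃ jj : Fin N, ∃ t : ℚ, t ≠ 0 ∧ x = t • s jj := by
  have : Uncountable ℂ := Complex.ofReal_injective.uncountable
  let A : Matrix (Fin l) (Fin l) ℚ := G.map (↑)
  have hA : ∀ y, y ᵥ* A = 0 → y = 0 := fun y hy => by
    by_contra hne
    have hpos : 0 < y ᵥ* A ⬝ᵥ y := (sum_sum_mul_mul_eq_vecMul_dotProduct A y y) ▸ hGpos y hne
    simp [hy] at hpos
  let form (y : Fin l → ℚ) : Module.Dual ℂ (Fin l → ℂ) :=
    dotProductEquiv ℂ _ (Rat.castHom ℂ ∘ (y ᵥ* A))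
  have hform (y : Fin l → ℚ) (z : Fin l → ℂ) :
      ∑ i, ∑ j, (G i j : ℂ) * ((y i : ℚ) : ℂ) * z j = form y z := by
    simp only [form, A, dotProductEquiv_apply_apply, vecMul, dotProduct, Function.comp_apply,
      Matrix.map_apply, Rat.coe_castHom, Rat.cast_sum, Rat.cast_mul, Rat.cast_intCast,
      Finset.sum_mul]
    rw [Finset.sum_comm]
    exact Finset.sum_congr rfl fun _ _ => Finset.sum_congr rfl fun _ _ => by ring
  obtain ⟨jj, hjj⟩ := (ker (form x)).exists_le_ker_of_forall_exists_mem_countable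
    (fun jj => form (s jj)) (Set.countable_range fun p : ℤ × ℤ => (p.1 : ℂ) * τ + p.2)
    fun z hz => by
      obtain ⟨jj, a, b, h⟩ := hcover z (by rw [hform]; exact hz)
      exact ⟨jj, (a, b), by rw [← hform, h]⟩
  obtain ⟨t, ht⟩ : ∃ t : ℚ, s jj ᵥ* A = t • (x ᵥ* A) :=
    exists_eq_smul_of_dotProduct_eq_zero_imp fun y hy => by
      have hcast (v : Fin l → ℚ) : form v (Rat.castHom ℂ ∘ y) = (v ᵥ* A ⬝ᵥ y : ℚ) :=
        ((Rat.castHom ℂ).map_dotProduct (v ᵥ* A) y).symm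
      have := hjj (x := Rat.castHom ℂ ∘ y) (by simp only [mem_ker, hcast, hy, Rat.cast_zero])
      simpa only [mem_ker, hcast, Rat.cast_eq_zero] using this
  have hs : s jj = t • x := sub_eq_zero.mp (hA _ (by rw [sub_vecMul, smul_vecMul, ht, sub_self]))
  have ht0 : t ≠ 0 := by
    rintro rfl
    exact hs0 jj (by simpa using hs)
  exact ⟨jj, t⁻¹, inv_ne_zero ht0, by rw [hs, smul_smul, inv_mul_cancel₀ ht0, one_smul]⟩

/-- Let `s` be a eutactic star on a positive definite integral lattice `L`
(Gram matrix `G`). For fixed `τ ∈ ℍ`, if `x ∈ L'` is a nonzero vector such that the complex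
hyperplane `{𝔷 : (x, 𝔷) = 0}` is contained in the zero set
`⋃_j {𝔷 : (s_j, 𝔷) ∈ ℤτ + ℤ}` of `Θ_s(τ, ·)`, then `x` is proportional over `ℚ` to some
`s_j`. -/
theorem stmt_16 {l N : ℕ} (G : Matrix (Fin l) (Fin l) ℤ) (hGsymm : G.IsSymm)
    (hGpos : ∀ x : Fin l → ℚ, x ≠ 0 → 0 < ∑ i, ∑ j, (G i j : ℚ) * x i * x j)
    (s : Fin N → (Fin l → ℚ)) (hs0 : ∀ jj, s jj ≠ 0)
    (hdual : ∀ jj, ∀ x : Fin l → ℤ,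
      ∃ k : ℤ, ∑ i, ∑ j, (G i j : ℚ) * s jj i * (x j : ℚ) = (k : ℚ))
    (heut : ∀ x : Fin l → ℤ,
      ∑ jj, (∑ i, ∑ j, (G i j : ℚ) * s jj i * (x j : ℚ)) ^ 2
        = ∑ i, ∑ j, (G i j : ℚ) * (x i : ℚ) * (x j : ℚ))
    (τ : ℂ) (hτ : 0 < τ.im)
    (x : Fin l → ℚ) (hx : x ≠ 0)
    (hcover : ∀ 𝔷 : Fin l → ℂ,
      (∑ i, ∑ j, (G i j : ℂ) * ((x i : ℚ) : ℂ) * 𝔷 j) = 0 →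
      ∃ jj : Fin N, ∃ a b : ℤ,
        (∑ i, ∑ j, (G i j : ℂ) * ((s jj i : ℚ) : ℂ) * 𝔷 j) = (a : ℂ) * τ + (b : ℂ)) :
    ∃ jj : Fin N, ∃ t : ℚ, t ≠ 0 ∧ x = t • s jj :=
  stmt_16_general G hGpos s hs0 τ x hcover
end
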